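/- For every $\gamma \in (0,1)$ there is a constant $C_\gamma > 0$ such that for all $t > 0$ and all $x, a, b \in \mathbb{R}^d$, $|p_t(a,x) - p_t(b,x)| \le C_\gamma \, t^{-\gamma/2} |a-b|^\gamma \big( p_{2t}(a,x) + p_{2t}(b,x) \big)$. -/

import Mathlib

open MeasureTheory Real Set

/-- The `d`-dimensional Gaussian heat kernel. -/
noncomputable def heatKernel (d : ℕ) (t : ℝ) (x y : EuclideanSpace ℝ (Fin d)) : ℝ :=
  (2 * π * t) ^ (-(d : ℝ) / 2) * Real.exp (-‖y - x‖ ^ 2 / (2 * t))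

/-! Put `u = ‖x - a‖ / √t`, `v = ‖x - b‖ / √t`, `c = ‖a - b‖ / √t`, so that `v ≤ u + c`. Where `u ≤ v`,
`e^{-u²/2} - e^{-v²/2} = e^{-u²/2} (1 - e^{-(v² - u²)/2})`, and the last factor is at most
`min (1, c (u + 1)) ≤ (c (u + 1))^γ ≤ c^γ (u + 1)`; finally `(u + 1) e^{-u²/2} ≤ e · e^{-u²/4}`, and
`(2πt)^{-d/2} e^{-u²/4} = 2^{d/2} p_{2t}(a, x)`. -/

lemma le_rpow_of_le_of_le_one {w y γ : ℝ} (hw : 0 ≤ w) (hw1 : w ≤ 1) (hwy : w ≤ y)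
    (hγ0 : 0 ≤ γ) (hγ1 : γ ≤ 1) : w ≤ y ^ γ :=
  (Real.self_le_rpow_of_le_one hw hw1 hγ1).trans (Real.rpow_le_rpow hw hwy hγ0)

lemma add_one_mul_exp_neg_sq_div_two_le (u : ℝ) :
    (u + 1) * exp (-u ^ 2 / 2) ≤ exp 1 * exp (-u ^ 2 / 4) := by
  calc (u + 1) * exp (-u ^ 2 / 2) ≤ exp u * exp (-u ^ 2 / 2) := by
        gcongr; exact add_one_le_exp u
    _ = exp (u - u ^ 2 / 2) := by rw [← exp_add]; ring_nf
    _ ≤ exp (1 - u ^ 2 / 4) := exp_le_exp.2 (by nlinarith [sq_nonneg (u - 2)])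
    _ = exp 1 * exp (-u ^ 2 / 4) := by rw [← exp_add]; ring_nf

lemma exp_neg_sq_div_two_sub_le {γ u v c : ℝ} (hγ0 : 0 ≤ γ) (hγ1 : γ ≤ 1)
    (hu : 0 ≤ u) (hv : 0 ≤ v) (hc : 0 ≤ c) (hvc : v ≤ u + c) :
    exp (-u ^ 2 / 2) - exp (-v ^ 2 / 2) ≤ exp 1 * c ^ γ * exp (-u ^ 2 / 4) := by
  rcases le_total v u with hvu | huv
  · have : exp (-u ^ 2 / 2) ≤ exp (-v ^ 2 / 2) :=
      exp_le_exp.2 (by nlinarith [mul_le_mul hvu hvu hv hu])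
    have : 0 ≤ exp 1 * c ^ γ * exp (-u ^ 2 / 4) := by positivity
    linarith
  set z := (v ^ 2 - u ^ 2) / 2 with hz
  have hz0 : 0 ≤ z := by nlinarith [mul_le_mul huv huv hu hv]
  have hexp_z : exp (-z) ≤ 1 := exp_le_one_iff.2 (by linarith)
  -- `v ^ 2 - u ^ 2 ≤ c (2 u + c)`, which is `≤ 2 c (u + 1)` as long as `c ≤ 1`
  have hlin : 1 - exp (-z) ≤ c * (u + 1) := by
    rcases le_total c 1 with hc1 | hc1
    · have : z ≤ c * (u + 1) := by nlinarith [mul_le_mul hvc hvc hv (by linarith : 0 ≤ u + c)]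
      linarith [one_sub_le_exp_neg z]
    · nlinarith [exp_pos (-z)]
  have hfactor : 1 - exp (-z) ≤ c ^ γ * (u + 1) :=
    calc 1 - exp (-z) ≤ (c * (u + 1)) ^ γ :=
          le_rpow_of_le_of_le_one (by linarith) (by linarith [exp_pos (-z)]) hlin hγ0 hγ1
      _ = c ^ γ * (u + 1) ^ γ := mul_rpow hc (by linarith)
      _ ≤ c ^ γ * (u + 1) := by gcongr; exact rpow_le_self_of_one_le (by linarith) hγ1
  calc exp (-u ^ 2 / 2) - exp (-v ^ 2 / 2) = exp (-u ^ 2 / 2) * (1 - exp (-z)) := by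
        rw [mul_sub, ← exp_add, hz]; ring_nf
    _ ≤ exp (-u ^ 2 / 2) * (c ^ γ * (u + 1)) := by gcongr
    _ = c ^ γ * ((u + 1) * exp (-u ^ 2 / 2)) := by ring
    _ ≤ c ^ γ * (exp 1 * exp (-u ^ 2 / 4)) :=
        mul_le_mul_of_nonneg_left (add_one_mul_exp_neg_sq_div_two_le u) (by positivity)
    _ = exp 1 * c ^ γ * exp (-u ^ 2 / 4) := by ring

section HeatKernel

variable {d : ℕ} {t : ℝ}

lemma heatKernel_nonneg (ht : 0 ≤ t) (x y : EuclideanSpace ℝ (Fin d)) :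
    0 ≤ heatKernel d t x y := by
  unfold heatKernel; positivity

lemma heatKernel_eq_of_pos (ht : 0 < t) (a x : EuclideanSpace ℝ (Fin d)) :
    heatKernel d t a x = (2 * π * t) ^ (-(d : ℝ) / 2) * exp (-(‖x - a‖ / √t) ^ 2 / 2) := by
  rw [heatKernel, div_pow, sq_sqrt ht.le]
  congr 2
  field_simp

lemma heatKernel_two_mul (ht : 0 < t) (a x : EuclideanSpace ℝ (Fin d)) :
    heatKernel d (2 * t) a x =
      2 ^ (-(d : ℝ) / 2) * ((2 * π * t) ^ (-(d : ℝ) / 2) * exp (-(‖x - a‖ / √t) ^ 2 / 4)) := by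
  rw [heatKernel, div_pow, sq_sqrt ht.le, show 2 * π * (2 * t) = 2 * (2 * π * t) by ring,
    mul_rpow zero_le_two (by positivity), mul_assoc]
  congr 3
  field_simp
  ring

lemma heatKernel_sub_le {γ : ℝ} (hγ0 : 0 ≤ γ) (hγ1 : γ ≤ 1) (ht : 0 < t)
    (x a b : EuclideanSpace ℝ (Fin d)) :
    heatKernel d t a x - heatKernel d t b x ≤
      2 ^ ((d : ℝ) / 2) * exp 1 * t ^ (-γ / 2) * ‖a - b‖ ^ γ * heatKernel d (2 * t) a x := by
  have hsqrt : 0 < √t := sqrt_pos.2 ht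
  have htriangle : ‖x - b‖ / √t ≤ ‖x - a‖ / √t + ‖a - b‖ / √t := by
    rw [← add_div]; gcongr; exact norm_sub_le_norm_sub_add_norm_sub x a b
  have hgauss := exp_neg_sq_div_two_sub_le hγ0 hγ1 (by positivity) (by positivity) (by positivity)
    htriangle
  have hscale : (‖a - b‖ / √t) ^ γ = t ^ (-γ / 2) * ‖a - b‖ ^ γ := by
    rw [div_rpow (norm_nonneg _) hsqrt.le, sqrt_eq_rpow, ← rpow_mul ht.le, div_eq_inv_mul,
      ← rpow_neg ht.le]
    ring_nf
  have htwo : (2 : ℝ) ^ ((d : ℝ) / 2) * 2 ^ (-(d : ℝ) / 2) = 1 := by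
    rw [← rpow_add zero_lt_two, neg_div, add_neg_cancel, rpow_zero]
  rw [heatKernel_eq_of_pos ht, heatKernel_eq_of_pos ht, heatKernel_two_mul ht, ← mul_sub]
  calc _ ≤ (2 * π * t) ^ (-(d : ℝ) / 2) *
        (exp 1 * (‖a - b‖ / √t) ^ γ * exp (-(‖x - a‖ / √t) ^ 2 / 4)) := by gcongr
    _ = _ := by rw [hscale]; linear_combination (exp 1 * t ^ (-γ / 2) * ‖a - b‖ ^ γ *
          ((2 * π * t) ^ (-(d : ℝ) / 2) * exp (-(‖x - a‖ / √t) ^ 2 / 4))) * htwo.symm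

end HeatKernel

theorem stmt6_general (d : ℕ) (γ : ℝ) (hγ0 : 0 < γ) (hγ1 : γ < 1) :
    ∃ C > 0, ∀ t : ℝ, 0 < t → ∀ x a b : EuclideanSpace ℝ (Fin d),
      |heatKernel d t a x - heatKernel d t b x| ≤
        C * t ^ (-γ / 2) * ‖a - b‖ ^ γ *
          (heatKernel d (2 * t) a x + heatKernel d (2 * t) b x) := by
  refine ⟨2 ^ ((d : ℝ) / 2) * exp 1, by positivity, fun t ht x a b => ?_⟩
  have hab := heatKernel_sub_le hγ0.le hγ1.le ht x a b
  have hba := heatKernel_sub_le hγ0.le hγ1.le ht x b a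
  rw [norm_sub_rev b a] at hba
  have hKa := heatKernel_nonneg (by positivity : 0 ≤ 2 * t) a x
  have hKb := heatKernel_nonneg (by positivity : 0 ≤ 2 * t) b x
  have hcoef : 0 ≤ 2 ^ ((d : ℝ) / 2) * exp 1 * t ^ (-γ / 2) * ‖a - b‖ ^ γ := by positivity
  rw [abs_sub_le_iff]
  constructor <;> nlinarith

theorem stmt6 (d : ℕ) (hd : 1 ≤ d) (γ : ℝ) (hγ0 : 0 < γ) (hγ1 : γ < 1) :
    ∃ C > 0, ∀ t : ℝ, 0 < t → ∀ x a b : EuclideanSpace ℝ (Fin d),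
      |heatKernel d t a x - heatKernel d t b x| ≤
        C * t ^ (-γ / 2) * ‖a - b‖ ^ γ *
          (heatKernel d (2 * t) a x + heatKernel d (2 * t) b x) :=
  stmt6_general d γ hγ0 hγ1
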